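/- Let k ≥ 1 be an integer, let T be a tree on t ≥ 2 vertices, and let G be the simple graph obtained from T by attaching 2k−1 new pendant leaves to each vertex of T (so G has 2kt vertices and every original tree vertex has degree at least 2k in G). If G' is a random k-out subgraph of G, then for every edge {u,v} of T, the probability that {u,v} is not an edge of G' is at least 1/4; consequently, the expected number of inter-component edges of G with respect to G' is at least (t−1)/4. -/

import Mathlib

open Finset

variable {V : Type*}

/-- The set of legal choices of one vertex `v` in the random `k`-out model:
`v` picks a set of exactly `min k (deg v)` of its neighbours. -/
abbrev kOutChoice [Fintype V] [DecidableEq V] (G : SimpleGraph V) [DecidableRel G.Adj]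
    (k : ℕ) (v : V) :=
  {A : Finset V // A ⊆ G.neighborFinset v ∧ A.card = min k (G.degree v)}

/-- The sample space of the random `k`-out model: every vertex independently and
uniformly picks a legal choice; the uniform measure on this finite product space
is exactly the joint distribution of the vertices' independent uniform choices. -/
abbrev kOutSpace [Fintype V] [DecidableEq V] (G : SimpleGraph V) [DecidableRel G.Adj]
    (k : ℕ) :=
  ∀ v : V, kOutChoice G k v

/-- The random `k`-out subgraph determined by an outcome `ω`: an edge is present
iff it was chosen by at least one of its endpoints. -/
def kOutGraph [Fintype V] [DecidableEq V] (G : SimpleGraph V) [DecidableRel G.Adj]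
    (k : ℕ) (ω : kOutSpace G k) : SimpleGraph V :=
  SimpleGraph.fromRel (fun u v => v ∈ (ω u).1)

/-- The number of edges of `G` whose endpoints lie in different connected
components of `H` (the inter-component edges of `G` with respect to `H`). -/
noncomputable def interCompCount (G H : SimpleGraph V) : ℕ :=
  Set.ncard {e : Sym2 V | e ∈ G.edgeSet ∧ ∀ u v : V, e = s(u, v) → ¬ H.Reachable u v}

/-- The expected number of inter-component edges of `G` with respect to a random
`k`-out subgraph of `G`: the average over the (uniform) finite sample space. -/
noncomputable def kOutExpect [Fintype V] [DecidableEq V] (G : SimpleGraph V)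
    [DecidableRel G.Adj] (k : ℕ) : ℝ :=
  (∑ ω : kOutSpace G k, (interCompCount G (kOutGraph G k ω) : ℝ)) /
    (Fintype.card (kOutSpace G k) : ℝ)

/-!
A tree vertex `u` has degree `d ≥ 2k` in `G`, so it avoids a fixed neighbour with probability
`C(d-1, k) / C(d, k) ≥ 1/2`. The two endpoints of a tree edge choose independently, hence the
edge is missing from `G'` with probability at least `1/4`. A missing tree edge is
inter-component: pendant leaves add no detours, and every edge of a tree is a bridge. Linearity
of expectation over the `t - 1` tree edges gives the second bound.
-/

theorem Nat.choose_le_two_mul_choose_pred {d k : ℕ} (h : 2 * k ≤ d) :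
    d.choose k ≤ 2 * (d - 1).choose k := by
  cases k with
  | zero => simp
  | succ j =>
    obtain ⟨e, rfl⟩ : ∃ e, d = e + 1 := ⟨d - 1, by omega⟩
    -- `choose e j ≤ choose e (j + 1)` because `j + 1 ≤ e - j`
    have hmono : e.choose j ≤ e.choose (j + 1) :=
      Nat.le_of_mul_le_mul_right (c := j + 1)
        (by rw [Nat.choose_succ_right_eq]; exact Nat.mul_le_mul_left _ (by omega)) j.succ_pos
    rw [Nat.choose_succ_succ', Nat.add_sub_cancel]
    omega

theorem Fintype.card_pi_le_prod_mul_card_piFinset {ι : Type*} [Fintype ι] [DecidableEq ι]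
    {C : ι → Type*} [∀ i, Fintype (C i)] (m : ι → ℕ) (S : ∀ i, Finset (C i))
    (h : ∀ i, Fintype.card (C i) ≤ m i * #(S i)) :
    Fintype.card (∀ i, C i) ≤ (∏ i, m i) * #(Fintype.piFinset S) := by
  rw [Fintype.card_pi, Fintype.card_piFinset, ← Finset.prod_mul_distrib]
  exact Finset.prod_le_prod (fun _ _ => Nat.zero_le _) fun i _ => h i

namespace SimpleGraph

variable {W : Type*} {G : SimpleGraph V} {H : SimpleGraph W}

theorem Reachable.lift (f : V → W) (hf : ∀ x y, G.Adj x y → H.Reachable (f x) (f y))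
    {x y : V} (hxy : G.Reachable x y) : H.Reachable (f x) (f y) := by
  rw [reachable_iff_reflTransGen] at hxy ⊢
  exact Relation.ReflTransGen.lift' f
    (fun x y h => (reachable_iff_reflTransGen _ _).1 (hf x y h)) _ _ hxy

theorem IsAcyclic.not_reachable_of_le {T : SimpleGraph V} (hT : T.IsAcyclic) (hGT : G ≤ T)
    {a b : V} (hab : T.Adj a b) (hG : ¬ G.Adj a b) : ¬ G.Reachable a b := fun hr =>
  have hacyc : (G ⊔ edge a b).IsAcyclic := hT.anti (sup_le hGT ((edge_le_iff _).2 (.inr hab)))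
  ((isAcyclic_sup_fromEdgeSet_iff.1 hacyc).2 hr).elim hab.ne hG

theorem forall_mk_eq_not_reachable_iff {x y : V} :
    (∀ u v, s(x, y) = s(u, v) → ¬ G.Reachable u v) ↔ ¬ G.Reachable x y := by
  refine ⟨fun h => h x y rfl, fun h u v huv => ?_⟩
  rcases Sym2.eq_iff.1 huv with ⟨rfl, rfl⟩ | ⟨rfl, rfl⟩
  exacts [h, fun h' => h h'.symm]

end SimpleGraph

section kOut

variable [Fintype V] [DecidableEq V] {G : SimpleGraph V} [DecidableRel G.Adj] {k : ℕ}

instance (v : V) : Nonempty (kOutChoice G k v) :=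
  have ⟨A, hA, hcard⟩ := Finset.exists_subset_card_eq (s := G.neighborFinset v)
    (n := min k (G.degree v)) ((min_le_right _ _).trans (G.card_neighborFinset_eq_degree v).ge)
  ⟨⟨A, hA, hcard⟩⟩

theorem kOutGraph_le (ω : kOutSpace G k) : kOutGraph G k ω ≤ G := by
  intro x y hxy
  rcases ((SimpleGraph.fromRel_adj _ x y).1 hxy).2 with h | h
  · exact (G.mem_neighborFinset x y).1 ((ω x).2.1 h)
  · exact ((G.mem_neighborFinset y x).1 ((ω y).2.1 h)).symm

theorem kOutGraph_adj_iff {ω : kOutSpace G k} {u w : V} (huw : u ≠ w) :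
    (kOutGraph G k ω).Adj u w ↔ w ∈ (ω u).1 ∨ u ∈ (ω w).1 := by
  simp [kOutGraph, huw]

theorem card_filter_kOutChoice_notMem {u w : V} (huw : G.Adj u w) (hk : k ≤ G.degree u) :
    #{c : kOutChoice G k u | w ∉ c.1} = (G.degree u - 1).choose k := by
  have hmap : ({c : kOutChoice G k u | w ∉ c.1} : Finset _).map (Function.Embedding.subtype _) =
      ((G.neighborFinset u).erase w).powersetCard k := by
    ext A
    simp only [mem_map, mem_filter, mem_univ, true_and, Function.Embedding.subtype_apply,
      Subtype.exists, min_eq_left hk, exists_and_left, exists_prop, exists_eq_right_right,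
      mem_powersetCard, subset_erase]
    tauto
  rw [← Finset.card_map, hmap, Finset.card_powersetCard,
    Finset.card_erase_of_mem ((G.mem_neighborFinset u w).2 huw), G.card_neighborFinset_eq_degree]

theorem card_kOutChoice {u : V} (hk : k ≤ G.degree u) :
    Fintype.card (kOutChoice G k u) = (G.degree u).choose k := by
  have hset : ({A : Finset V | A ⊆ G.neighborFinset u ∧ #A = min k (G.degree u)} : Finset _) =
      (G.neighborFinset u).powersetCard k := by
    ext A
    simp [min_eq_left hk]
  rw [Fintype.card_subtype, hset, Finset.card_powersetCard, G.card_neighborFinset_eq_degree]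

theorem card_kOutChoice_le_two_mul {u w : V} (huw : G.Adj u w) (hk : 2 * k ≤ G.degree u) :
    Fintype.card (kOutChoice G k u) ≤ 2 * #{c : kOutChoice G k u | w ∉ c.1} := by
  rw [card_kOutChoice (by omega), card_filter_kOutChoice_notMem huw (by omega)]
  exact Nat.choose_le_two_mul_choose_pred hk

theorem card_kOutSpace_le_four_mul_ncard_not_adj {u w : V} (huw : G.Adj u w)
    (hu : 2 * k ≤ G.degree u) (hw : 2 * k ≤ G.degree w) :
    Fintype.card (kOutSpace G k) ≤
      4 * {ω : kOutSpace G k | ¬ (kOutGraph G k ω).Adj u w}.ncard := by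
  -- the edge is missing iff `u` does not pick `w` and `w` does not pick `u`: independent events
  let S (v : V) : Finset (kOutChoice G k v) := {c | (v = u → w ∉ c.1) ∧ (v = w → u ∉ c.1)}
  have hmiss : {ω : kOutSpace G k | ¬ (kOutGraph G k ω).Adj u w} = Fintype.piFinset S := by
    ext ω
    simp [S, kOutGraph_adj_iff huw.ne, forall_and]
  have hS (v : V) :
      Fintype.card (kOutChoice G k v) ≤
        (if v ∈ ({u, w} : Finset V) then 2 else 1) * #(S v) := by
    by_cases hvu : v = u
    · subst hvu
      simpa [S, huw.ne] using card_kOutChoice_le_two_mul huw hu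
    by_cases hvw : v = w
    · subst hvw
      simpa [S, huw.ne'] using card_kOutChoice_le_two_mul huw.symm hw
    · simp [S, hvu, hvw]
  have hprod : ∏ v, (if v ∈ ({u, w} : Finset V) then 2 else 1) = 4 := by
    rw [Finset.prod_ite_mem, Finset.univ_inter, Finset.prod_const, Finset.card_pair huw.ne]
    norm_num
  rw [hmiss, Set.ncard_coe_finset, ← hprod]
  exact Fintype.card_pi_le_prod_mul_card_piFinset _ S hS

end kOut

theorem card_le_interCompCount [Finite V] {G H : SimpleGraph V} {s : Finset (Sym2 V)}
    (hs : ∀ e ∈ s, e ∈ G.edgeSet ∧ ∀ u v, e = s(u, v) → ¬ H.Reachable u v) :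
    #s ≤ interCompCount G H := by
  rw [interCompCount, ← Set.ncard_coe_finset]
  exact Set.ncard_le_ncard hs (Set.toFinite _)

theorem card_mul_card_le_mul_sum_interCompCount [Finite V] {Ω : Type*} [Fintype Ω]
    (G : SimpleGraph V) (H : Ω → SimpleGraph V) (s : Finset (Sym2 V)) (c : ℕ)
    (hs : ∀ e ∈ s, e ∈ G.edgeSet ∧
      Fintype.card Ω ≤ c * {ω | ∀ u v, e = s(u, v) → ¬ (H ω).Reachable u v}.ncard) :
    #s * Fintype.card Ω ≤ c * ∑ ω, interCompCount G (H ω) := by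
  classical
  let cut (ω : Ω) (e : Sym2 V) : Prop := ∀ u v, e = s(u, v) → ¬ (H ω).Reachable u v
  calc #s * Fintype.card Ω = ∑ e ∈ s, Fintype.card Ω := by rw [Finset.sum_const, smul_eq_mul]
    _ ≤ ∑ e ∈ s, c * #{ω | cut ω e} := Finset.sum_le_sum fun e he => by
        simpa [← Set.ncard_coe_finset, cut] using (hs e he).2
    _ = c * ∑ ω, #{e ∈ s | cut ω e} := by
        simp_rw [← Finset.mul_sum, Finset.card_filter]
        rw [Finset.sum_comm]
    _ ≤ c * ∑ ω, interCompCount G (H ω) := by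
        gcongr with ω
        exact card_le_interCompCount fun e he =>
          ⟨(hs e (Finset.mem_filter.1 he).1).1, (Finset.mem_filter.1 he).2⟩

namespace SimpleGraph

variable {α : Type*} {T : SimpleGraph α} {n : ℕ}

def withPendantLeaves (T : SimpleGraph α) (n : ℕ) : SimpleGraph (α ⊕ α × Fin n) where
  Adj x y := (∃ a b, T.Adj a b ∧ x = .inl a ∧ y = .inl b) ∨
    ∃ a i, (x = .inl a ∧ y = .inr (a, i)) ∨ (x = .inr (a, i) ∧ y = .inl a)
  symm := ⟨by
    rintro x y (⟨a, b, hab, rfl, rfl⟩ | ⟨a, i, ⟨rfl, rfl⟩ | ⟨rfl, rfl⟩⟩)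
    exacts [.inl ⟨b, a, hab.symm, rfl, rfl⟩, .inr ⟨a, i, .inr ⟨rfl, rfl⟩⟩,
      .inr ⟨a, i, .inl ⟨rfl, rfl⟩⟩]⟩
  loopless := ⟨by
    rintro x (⟨a, b, hab, rfl, h⟩ | ⟨a, i, ⟨rfl, h⟩ | ⟨rfl, h⟩⟩)
    · exact hab.ne (Sum.inl_injective h)
    all_goals cases h⟩

@[simp]
theorem withPendantLeaves_adj_inl {a b : α} :
    (T.withPendantLeaves n).Adj (.inl a) (.inl b) ↔ T.Adj a b := by
  simp [withPendantLeaves]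

theorem withPendantLeaves_adj_inl_inr (a : α) (i : Fin n) :
    (T.withPendantLeaves n).Adj (.inl a) (.inr (a, i)) :=
  .inr ⟨a, i, .inl ⟨rfl, rfl⟩⟩

theorem le_degree_inl_withPendantLeaves [Fintype α] [DecidableEq α]
    [DecidableRel (T.withPendantLeaves n).Adj] {a b : α} (hab : T.Adj a b) :
    n + 1 ≤ (T.withPendantLeaves n).degree (.inl a) := by
  let leaves : Finset (α ⊕ α × Fin n) :=
    univ.map ⟨fun i => .inr (a, i), fun i j h => by simpa using h⟩
  have hsub : insert (.inl b) leaves ⊆ (T.withPendantLeaves n).neighborFinset (.inl a) := by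
    intro x hx
    obtain rfl | ⟨i, -, rfl⟩ := by simpa [leaves] using hx
    · simpa using hab
    · exact (mem_neighborFinset _ _ _).2 (withPendantLeaves_adj_inl_inr a i)
  calc n + 1 = #(insert (.inl b) leaves) := by simp [leaves]
    _ ≤ _ := (Finset.card_le_card hsub).trans_eq (card_neighborFinset_eq_degree _ _)

theorem Reachable.comap_inl_of_le_withPendantLeaves {H : SimpleGraph (α ⊕ α × Fin n)}
    (hH : H ≤ T.withPendantLeaves n) {x y : α ⊕ α × Fin n} (hxy : H.Reachable x y) :
    (H.comap .inl).Reachable (Sum.elim id Prod.fst x) (Sum.elim id Prod.fst y) := by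
  refine hxy.lift _ fun x y h => ?_
  rcases hH h with ⟨a, b, -, rfl, rfl⟩ | ⟨a, i, ⟨rfl, rfl⟩ | ⟨rfl, rfl⟩⟩
  exacts [Adj.reachable h, .rfl, .rfl]

theorem not_reachable_inl_of_le_withPendantLeaves (hT : T.IsAcyclic)
    {H : SimpleGraph (α ⊕ α × Fin n)} (hH : H ≤ T.withPendantLeaves n) {a b : α}
    (hab : T.Adj a b) (hn : ¬ H.Adj (.inl a) (.inl b)) : ¬ H.Reachable (.inl a) (.inl b) :=
  fun hr => hT.not_reachable_of_le (G := H.comap Sum.inl)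
    (fun _ _ h => withPendantLeaves_adj_inl.1 (hH h)) hab hn
    (hr.comap_inl_of_le_withPendantLeaves hH)

end SimpleGraph

section PendantLeaves

open SimpleGraph

variable {α : Type*} [Fintype α] [DecidableEq α] {T : SimpleGraph α} {k : ℕ}
  [DecidableRel (T.withPendantLeaves (2 * k - 1)).Adj]

theorem card_kOutSpace_withPendantLeaves_le_four_mul {a b : α} (hab : T.Adj a b) :
    Fintype.card (kOutSpace (T.withPendantLeaves (2 * k - 1)) k) ≤
      4 * {ω | ¬ (kOutGraph (T.withPendantLeaves (2 * k - 1)) k ω).Adj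
        (.inl a) (.inl b)}.ncard :=
  have hdeg {x y : α} (hxy : T.Adj x y) :
      2 * k ≤ (T.withPendantLeaves (2 * k - 1)).degree (.inl x) :=
    le_trans (by omega) (le_degree_inl_withPendantLeaves hxy)
  card_kOutSpace_le_four_mul_ncard_not_adj (withPendantLeaves_adj_inl.2 hab) (hdeg hab)
    (hdeg hab.symm)

theorem card_edgeFinset_mul_card_kOutSpace_withPendantLeaves_le [Fintype T.edgeSet]
    (hT : T.IsAcyclic) :
    #T.edgeFinset * Fintype.card (kOutSpace (T.withPendantLeaves (2 * k - 1)) k) ≤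
      4 * ∑ ω, interCompCount (T.withPendantLeaves (2 * k - 1))
        (kOutGraph (T.withPendantLeaves (2 * k - 1)) k ω) := by
  rw [← Finset.card_map Function.Embedding.inl.sym2Map]
  refine card_mul_card_le_mul_sum_interCompCount _ _ _ 4 ?_
  simp only [Finset.forall_mem_map, Sym2.forall, mem_edgeFinset, mem_edgeSet,
    Function.Embedding.sym2Map_apply, Sym2.map_mk]
  intro a b hab
  refine ⟨withPendantLeaves_adj_inl.2 hab,
    (card_kOutSpace_withPendantLeaves_le_four_mul hab).trans ?_⟩
  refine Nat.mul_le_mul_left 4 (Set.ncard_le_ncard (fun ω hω => ?_) (Set.toFinite _))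
  exact forall_mk_eq_not_reachable_iff.2
    (not_reachable_inl_of_le_withPendantLeaves hT (kOutGraph_le ω) hab hω)

end PendantLeaves

theorem kOut_tree_with_leaves_lower_bound_general
    {α : Type} [Fintype α] [DecidableEq α] (t k : ℕ)
    (hcard : Fintype.card α = t) (T : SimpleGraph α) (hT : T.IsTree)
    (G : SimpleGraph (α ⊕ α × Fin (2 * k - 1))) [DecidableRel G.Adj]
    (hG : ∀ x y : α ⊕ α × Fin (2 * k - 1), G.Adj x y ↔
      ((∃ a b : α, T.Adj a b ∧ x = Sum.inl a ∧ y = Sum.inl b) ∨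
       (∃ (a : α) (i : Fin (2 * k - 1)),
         (x = Sum.inl a ∧ y = Sum.inr (a, i)) ∨ (x = Sum.inr (a, i) ∧ y = Sum.inl a)))) :
    (∀ a b : α, T.Adj a b →
      (1 : ℝ) / 4 ≤
        (Set.ncard {ω : kOutSpace G k |
            ¬ (kOutGraph G k ω).Adj (Sum.inl a) (Sum.inl b)} : ℝ) /
          (Fintype.card (kOutSpace G k) : ℝ)) ∧
      ((t : ℝ) - 1) / 4 ≤ kOutExpect G k := by
  classical
  obtain rfl : G = T.withPendantLeaves (2 * k - 1) := by ext x y; exact hG x y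
  have hpos : (0 : ℝ) < Fintype.card (kOutSpace (T.withPendantLeaves (2 * k - 1)) k) := by
    exact_mod_cast Fintype.card_pos
  refine ⟨fun a b hab => ?_, ?_⟩
  · rw [div_le_div_iff₀ four_pos hpos, one_mul, mul_comm _ (4 : ℝ)]
    exact_mod_cast card_kOutSpace_withPendantLeaves_le_four_mul hab
  · have hedges : (#T.edgeFinset : ℝ) = t - 1 := by
      rw [eq_sub_iff_add_eq, ← hcard]
      exact_mod_cast hT.card_edgeFinset
    rw [kOutExpect, div_le_div_iff₀ four_pos hpos, ← hedges, mul_comm _ (4 : ℝ)]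
    exact_mod_cast card_edgeFinset_mul_card_kOutSpace_withPendantLeaves_le hT.isAcyclic

/-- Let `k ≥ 1`, let `T` be a tree on `t ≥ 2` vertices, and let
`G` be obtained from `T` by attaching `2k-1` new pendant leaves to each vertex of
`T` (vertices `Sum.inl a` are the tree vertices, `Sum.inr (a, i)` the leaves
attached to `a`).  Then for every edge `{a,b}` of `T`, a random `k`-out subgraph
`G'` of `G` misses this edge with probability at least `1/4`; consequently the
expected number of inter-component edges of `G` w.r.t. `G'` is at least `(t-1)/4`. -/
theorem kOut_tree_with_leaves_lower_bound
    {α : Type} [Fintype α] [DecidableEq α] (t k : ℕ) (hk : 1 ≤ k) (ht : 2 ≤ t)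
    (hcard : Fintype.card α = t) (T : SimpleGraph α) (hT : T.IsTree)
    (G : SimpleGraph (α ⊕ α × Fin (2 * k - 1))) [DecidableRel G.Adj]
    (hG : ∀ x y : α ⊕ α × Fin (2 * k - 1), G.Adj x y ↔
      ((∃ a b : α, T.Adj a b ∧ x = Sum.inl a ∧ y = Sum.inl b) ∨
       (∃ (a : α) (i : Fin (2 * k - 1)),
         (x = Sum.inl a ∧ y = Sum.inr (a, i)) ∨ (x = Sum.inr (a, i) ∧ y = Sum.inl a)))) :
    (∀ a b : α, T.Adj a b →
      (1 : ℝ) / 4 ≤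
        (Set.ncard {ω : kOutSpace G k |
            ¬ (kOutGraph G k ω).Adj (Sum.inl a) (Sum.inl b)} : ℝ) /
          (Fintype.card (kOutSpace G k) : ℝ)) ∧
      ((t : ℝ) - 1) / 4 ≤ kOutExpect G k :=
  kOut_tree_with_leaves_lower_bound_general t k hcard T hT G hG
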